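/- Let γ = (c_1,…,c_n) be a clan of signature (p,q), let (i,j) be a pair of γ, and suppose j < n and c_{j+1} is a sign (+ or −). Let γ′ be the clan obtained from γ by interchanging the entries in positions j and j+1 (so the number moves one step farther from its mate, across a sign). Then D(γ′) = D(γ) + 1. Symmetrically, if i > 1 and c_{i−1} is a sign, interchanging positions i−1 and i also increases D by exactly 1. (This is the move that interchanges a number with a sign so as to move the number farther from its equal mate, which makes the corresponding orbit strictly larger.) -/

import Mathlib

/-- An entry of a clan: a plus sign, a minus sign, or a natural number. -/
inductive CEntry : Type where
  | plus : CEntry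
  | minus : CEntry
  | num : ℕ → CEntry
deriving DecidableEq

/-- Whether an entry is a natural number. -/
def CEntry.isNum : CEntry → Bool
  | .num _ => true
  | _ => false

/-- Whether an entry is a sign (`+` or `−`). -/
def CEntry.isSign : CEntry → Bool
  | .num _ => false
  | _ => true

/-- A clan of signature `(p, q)`: a sequence of `n = p + q` symbols, each `+`, `−`, or a
natural number, such that every natural number occurring in the sequence occurs exactly
twice, and the number of `+` entries plus the number of pairs of equal numbers is `p`. -/
structure Clan (n p q : ℕ) : Type where
  c : Fin n → CEntry
  total : n = p + q
  twice : ∀ a : ℕ, (Finset.univ.filter fun i => c i = CEntry.num a).card = 0 ∨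
      (Finset.univ.filter fun i => c i = CEntry.num a).card = 2
  signature : (Finset.univ.filter fun i => c i = CEntry.plus).card
      + (Finset.univ.filter fun i => (c i).isNum = true).card / 2 = p

namespace Clan

variable {n p q : ℕ}

/-- `(i, j)` is a pair of the clan `γ`: `i < j` and `c i = c j` is a natural number. -/
def IsPair (γ : Clan n p q) (i j : Fin n) : Prop :=
  i < j ∧ γ.c i = γ.c j ∧ (γ.c i).isNum = true

instance (γ : Clan n p q) (i j : Fin n) : Decidable (γ.IsPair i j) := by
  unfold IsPair; infer_instance

/-- The finset of all pairs of the clan `γ`. -/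
def pairs (γ : Clan n p q) : Finset (Fin n × Fin n) :=
  Finset.univ.filter fun x => γ.IsPair x.1 x.2

/-- The contribution `j − i − #{pairs (s,t) of γ with s < i < t < j}` of a pair `(i, j)`
to the dimension of the orbit parametrized by `γ`. -/
def summand (γ : Clan n p q) (x : Fin n × Fin n) : ℕ :=
  (x.2 : ℕ) - (x.1 : ℕ) -
    (γ.pairs.filter fun y => y.1 < x.1 ∧ x.1 < y.2 ∧ y.2 < x.2).card

/-- `d_{p,q} = (p(p−1) + q(q−1))/2`, the dimension of the closed orbits. -/
def dpq (p q : ℕ) : ℕ := (p * (p - 1) + q * (q - 1)) / 2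

/-- The dimension of the `GL_p × GL_q`-orbit on the flag variety parametrized by `γ`. -/
def D (γ : Clan n p q) : ℕ := dpq p q + ∑ x ∈ γ.pairs, γ.summand x

/-- `γ` includes the pattern `(1, +, −, 1)`. -/
def Includes1pm1 (γ : Clan n p q) : Prop :=
  ∃ i k l j : Fin n, i < k ∧ k < l ∧ l < j ∧
    γ.c k = CEntry.plus ∧ γ.c l = CEntry.minus ∧ γ.IsPair i j

/-- `γ` includes the pattern `(1, −, +, 1)`. -/
def Includes1mp1 (γ : Clan n p q) : Prop :=
  ∃ i k l j : Fin n, i < k ∧ k < l ∧ l < j ∧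
    γ.c k = CEntry.minus ∧ γ.c l = CEntry.plus ∧ γ.IsPair i j

/-- `γ` includes the pattern `(1, 2, 1, 2)`. -/
def Includes1212 (γ : Clan n p q) : Prop :=
  ∃ i s j t : Fin n, i < s ∧ s < j ∧ j < t ∧
    γ.IsPair i j ∧ γ.IsPair s t ∧ γ.c i ≠ γ.c s

/-- `γ` includes the pattern `(1, +, 2, 2, 1)`. -/
def Includes1p221 (γ : Clan n p q) : Prop :=
  ∃ i k s t j : Fin n, i < k ∧ k < s ∧ s < t ∧ t < j ∧
    γ.c k = CEntry.plus ∧ γ.IsPair i j ∧ γ.IsPair s t ∧ γ.c i ≠ γ.c s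

/-- `γ` includes the pattern `(1, −, 2, 2, 1)`. -/
def Includes1m221 (γ : Clan n p q) : Prop :=
  ∃ i k s t j : Fin n, i < k ∧ k < s ∧ s < t ∧ t < j ∧
    γ.c k = CEntry.minus ∧ γ.IsPair i j ∧ γ.IsPair s t ∧ γ.c i ≠ γ.c s

/-- `γ` includes the pattern `(1, 2, 2, +, 1)`. -/
def Includes122p1 (γ : Clan n p q) : Prop :=
  ∃ i s t k j : Fin n, i < s ∧ s < t ∧ t < k ∧ k < j ∧
    γ.c k = CEntry.plus ∧ γ.IsPair i j ∧ γ.IsPair s t ∧ γ.c i ≠ γ.c s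

/-- `γ` includes the pattern `(1, 2, 2, −, 1)`. -/
def Includes122m1 (γ : Clan n p q) : Prop :=
  ∃ i s t k j : Fin n, i < s ∧ s < t ∧ t < k ∧ k < j ∧
    γ.c k = CEntry.minus ∧ γ.IsPair i j ∧ γ.IsPair s t ∧ γ.c i ≠ γ.c s

/-- `γ` avoids the seven patterns `(1,+,−,1)`, `(1,−,+,1)`, `(1,2,1,2)`, `(1,+,2,2,1)`,
`(1,−,2,2,1)`, `(1,2,2,+,1)`, `(1,2,2,−,1)`. -/
def AvoidsSeven (γ : Clan n p q) : Prop :=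
  ¬ γ.Includes1pm1 ∧ ¬ γ.Includes1mp1 ∧ ¬ γ.Includes1212 ∧
    ¬ γ.Includes1p221 ∧ ¬ γ.Includes1m221 ∧ ¬ γ.Includes122p1 ∧ ¬ γ.Includes122m1

end Clan

/-- The move replacing a pair of opposite signs of `γ` in positions `i < j` by a pair of
equal numbers not occurring in `γ`, yielding `γ'`. -/
def ReplaceMove {n p q : ℕ} (γ γ' : Clan n p q) : Prop :=
  ∃ i j : Fin n, i < j ∧
    ((γ.c i = CEntry.plus ∧ γ.c j = CEntry.minus) ∨
      (γ.c i = CEntry.minus ∧ γ.c j = CEntry.plus)) ∧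
    (∃ a : ℕ, (∀ k, γ.c k ≠ CEntry.num a) ∧
      γ'.c i = CEntry.num a ∧ γ'.c j = CEntry.num a) ∧
    ∀ k, k ≠ i → k ≠ j → γ'.c k = γ.c k

/-!
Swapping a number at position `b` with a sign at an adjacent position `a` relabels the
positions by the transposition `σ = (a b)`, which preserves the relative order of any two
positions different from `a`. Every position occurring in a pair is different from the sign
position `a`, so `σ` maps the pairs of `γ` bijectively onto those of `γ'` and preserves every
crossing count `#{(s,t) : s < i < t < j}`. Only the length `j − i` of the moved pair changes,
by one; since that length bounds its crossing count, `D` grows by exactly one.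
-/

open Equiv

section CovBy

variable {α : Type*} [LinearOrder α] {a b : α}

theorem lt_iff_lt_of_covBy_or_covBy (hab : a ⋖ b ∨ b ⋖ a) {w : α} (hwa : w ≠ a)
    (hwb : w ≠ b) : a < w ↔ b < w := by
  rcases hab with h | h
  · exact ⟨fun hw => (h.ge_of_gt hw).lt_of_ne' hwb, h.lt.trans⟩
  · exact ⟨h.lt.trans, fun hw => (h.ge_of_gt hw).lt_of_ne' hwa⟩

theorem swap_lt_swap_iff_of_covBy_or_covBy (hab : a ⋖ b ∨ b ⋖ a) {u v : α} (hu : u ≠ a)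
    (hv : v ≠ a) : swap a b u < swap a b v ↔ u < v := by
  by_cases hub : u = b <;> by_cases hvb : v = b
  · simp [hub, hvb]
  · rw [hub, swap_apply_right, swap_apply_of_ne_of_ne hv hvb]
    exact lt_iff_lt_of_covBy_or_covBy hab hv hvb
  · rw [hvb, swap_apply_right, swap_apply_of_ne_of_ne hu hub, ← not_le, ← not_le,
      le_iff_lt_or_eq, le_iff_lt_or_eq, lt_iff_lt_of_covBy_or_covBy hab hu hub]
    simp [Ne.symm hu, Ne.symm hub]
  · rw [swap_apply_of_ne_of_ne hu hub, swap_apply_of_ne_of_ne hv hvb]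

end CovBy

theorem eq_comp_swap_of_forall_ne {α β : Type*} [DecidableEq α] {f g : α → β} {a b : α}
    (ha : g a = f b) (hb : g b = f a) (h : ∀ k, k ≠ a → k ≠ b → g k = f k) :
    g = f ∘ swap a b := by
  funext k
  rw [Function.comp_apply, swap_apply_def]
  split_ifs with hka hkb
  · rw [hka, ha]
  · rw [hkb, hb]
  · exact h k hka hkb

theorem CEntry.exists_eq_num_of_isNum {e : CEntry} (h : e.isNum = true) :
    ∃ a, e = CEntry.num a := by
  cases e <;> simp_all [CEntry.isNum]

namespace Clan

variable {n p q : ℕ} {γ γ' : Clan n p q}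

theorem mem_pairs {x : Fin n × Fin n} : x ∈ γ.pairs ↔ γ.IsPair x.1 x.2 := by
  simp [pairs]

theorem ne_of_isNum_of_isSign {u a : Fin n} (hu : (γ.c u).isNum = true)
    (ha : (γ.c a).isSign = true) : u ≠ a := by
  rintro rfl
  obtain ⟨a, ha'⟩ := CEntry.exists_eq_num_of_isNum hu
  simp [ha', CEntry.isSign] at ha

theorem eq_or_eq_of_isPair {i j k : Fin n} (h : γ.IsPair i j) (hk : γ.c k = γ.c i) :
    k = i ∨ k = j := by
  obtain ⟨hij, hc, hnum⟩ := h
  obtain ⟨a, ha⟩ := CEntry.exists_eq_num_of_isNum hnum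
  have hj : γ.c j = CEntry.num a := hc ▸ ha
  have hk' : γ.c k = CEntry.num a := hk.trans ha
  by_contra! hne
  have hsub : {i, j, k} ⊆ Finset.univ.filter fun l => γ.c l = CEntry.num a := by
    intro l hl
    simp only [Finset.mem_insert, Finset.mem_singleton] at hl
    rcases hl with rfl | rfl | rfl <;> simp [ha, hj, hk']
  have hthree : ({i, j, k} : Finset (Fin n)).card = 3 :=
    Finset.card_eq_three.mpr ⟨i, j, k, hij.ne, hne.1.symm, hne.2.symm, rfl⟩
  have := Finset.card_le_card hsub
  rcases γ.twice a with h | h <;> omega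

theorem IsPair.eq_of_shared {i j s t u : Fin n} (h : γ.IsPair i j) (h' : γ.IsPair s t)
    (hu : u = i ∨ u = j) (hu' : u = s ∨ u = t) : s = i ∧ t = j := by
  have hcu : γ.c u = γ.c i := by rcases hu with rfl | rfl <;> simp [h.2.1]
  have hcs : γ.c s = γ.c i := by rcases hu' with rfl | rfl <;> simp [hcu, h'.2.1]
  have hs := eq_or_eq_of_isPair h hcs
  have ht := eq_or_eq_of_isPair h (h'.2.1.symm.trans hcs)
  have hij := h.1
  have hst := h'.1
  simp only [Fin.ext_iff, Fin.lt_def] at hs ht hij hst ⊢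
  omega

def crossings (γ : Clan n p q) (x : Fin n × Fin n) : Finset (Fin n × Fin n) :=
  γ.pairs.filter fun y => y.1 < x.1 ∧ x.1 < y.2 ∧ y.2 < x.2

theorem summand_eq (x : Fin n × Fin n) : γ.summand x = x.2 - x.1 - (γ.crossings x).card := rfl

theorem card_crossings_le (x : Fin n × Fin n) : (γ.crossings x).card ≤ (x.2 : ℕ) - x.1 := by
  calc _ ≤ (Finset.Ioo (x.1 : ℕ) x.2).card := by
        refine Finset.card_le_card_of_injOn (fun y => (y.2 : ℕ)) ?_ ?_
        · intro y hy
          simp only [crossings, Finset.coe_filter, Set.mem_ofPred_eq] at hy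
          simp [hy.2.2.1, hy.2.2.2]
        · intro y hy y' hy' hyy'
          simp only [crossings, Finset.coe_filter, mem_pairs, Set.mem_ofPred_eq] at hy hy'
          obtain ⟨h1, h2⟩ := hy.1.eq_of_shared hy'.1 (Or.inr rfl) (Or.inr (Fin.ext hyy'))
          exact (Prod.ext h1 h2).symm
    _ ≤ _ := by simp

section Swap

variable {a b : Fin n} (hab : a ⋖ b ∨ b ⋖ a) (ha : (γ.c a).isSign = true)
  (hγ' : γ'.c = γ.c ∘ swap a b)
include hab ha hγ'

theorem isPair_iff_of_swap {s t : Fin n} :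
    γ'.IsPair s t ↔ γ.IsPair (swap a b s) (swap a b t) := by
  have key (hc : γ.c (swap a b s) = γ.c (swap a b t)) (hnum : (γ.c (swap a b s)).isNum = true) :
      swap a b s < swap a b t ↔ s < t := by
    have hs : swap a b s ≠ a := ne_of_isNum_of_isSign hnum ha
    have ht : swap a b t ≠ a := ne_of_isNum_of_isSign (hc ▸ hnum) ha
    simpa using (swap_lt_swap_iff_of_covBy_or_covBy hab hs ht).symm
  simp only [IsPair, hγ', Function.comp_apply]
  exact ⟨fun ⟨hst, hc, hnum⟩ => ⟨(key hc hnum).2 hst, hc, hnum⟩,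
    fun ⟨hst, hc, hnum⟩ => ⟨(key hc hnum).1 hst, hc, hnum⟩⟩

theorem pairs_eq_map_of_swap :
    γ'.pairs = γ.pairs.map (prodCongr (swap a b) (swap a b)).toEmbedding := by
  ext x
  simp [Finset.mem_map_equiv, mem_pairs, isPair_iff_of_swap hab ha hγ']

theorem card_crossings_map_swap {y : Fin n × Fin n} (hy : y ∈ γ.pairs) :
    (γ'.crossings (prodCongr (swap a b) (swap a b) y)).card = (γ.crossings y).card := by
  have hna {u : Fin n} (hu : (γ.c u).isNum = true) : u ≠ a := ne_of_isNum_of_isSign hu ha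
  rw [mem_pairs] at hy
  rw [crossings, pairs_eq_map_of_swap hab ha hγ', Finset.filter_map, Finset.card_map, crossings]
  refine congrArg Finset.card (Finset.filter_congr fun z hz => ?_)
  rw [mem_pairs] at hz
  have hz2 : (γ.c z.2).isNum = true := hz.2.1 ▸ hz.2.2
  have hy2 : (γ.c y.2).isNum = true := hy.2.1 ▸ hy.2.2
  simp only [Function.comp_apply, Equiv.coe_toEmbedding, prodCongr_apply, Prod.map_fst,
    Prod.map_snd, swap_lt_swap_iff_of_covBy_or_covBy hab (hna hz.2.2) (hna hy.2.2),
    swap_lt_swap_iff_of_covBy_or_covBy hab (hna hy.2.2) (hna hz2),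
    swap_lt_swap_iff_of_covBy_or_covBy hab (hna hz2) (hna hy2)]

theorem summand_map_swap {y : Fin n × Fin n} (hy : y ∈ γ.pairs) :
    γ'.summand (prodCongr (swap a b) (swap a b) y) + (y.2 - y.1)
      = γ.summand y + (swap a b y.2 - swap a b y.1) := by
  have h := card_crossings_le (γ := γ) y
  have h' := card_crossings_le (γ := γ') (prodCongr (swap a b) (swap a b) y)
  rw [card_crossings_map_swap hab ha hγ' hy] at h'
  rw [summand_eq, summand_eq, card_crossings_map_swap hab ha hγ' hy]
  simp only [prodCongr_apply, Prod.map_fst, Prod.map_snd] at h' ⊢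
  omega

theorem D_eq_add_one_of_swap {x : Fin n × Fin n} (hx : x ∈ γ.pairs) (hbx : x.1 = b ∨ x.2 = b)
    (hlen : (swap a b x.2 : ℕ) - swap a b x.1 = x.2 - x.1 + 1) : γ'.D = γ.D + 1 := by
  have hfixed (y) (hy : y ∈ γ.pairs.erase x) :
      γ'.summand (prodCongr (swap a b) (swap a b) y) = γ.summand y := by
    obtain ⟨hyx, hy⟩ := Finset.mem_erase.mp hy
    have hy' := mem_pairs.mp hy
    have hyb (u) (hu : u = y.1 ∨ u = y.2) : u ≠ b := by
      rintro rfl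
      obtain ⟨h1, h2⟩ := (mem_pairs.mp hx).eq_of_shared hy' (hbx.imp Eq.symm Eq.symm) hu
      exact hyx (Prod.ext h1 h2)
    have hya1 := ne_of_isNum_of_isSign hy'.2.2 ha
    have hya2 := ne_of_isNum_of_isSign (hy'.2.1 ▸ hy'.2.2) ha
    have := summand_map_swap hab ha hγ' hy
    rw [swap_apply_of_ne_of_ne hya1 (hyb _ (Or.inl rfl)),
      swap_apply_of_ne_of_ne hya2 (hyb _ (Or.inr rfl))] at this
    omega
  have hmoved : γ'.summand (prodCongr (swap a b) (swap a b) x) = γ.summand x + 1 := by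
    have := summand_map_swap hab ha hγ' hx
    omega
  calc γ'.D = dpq p q + ∑ y ∈ γ.pairs, γ'.summand (prodCongr (swap a b) (swap a b) y) := by
        rw [D, pairs_eq_map_of_swap hab ha hγ', Finset.sum_map]
        rfl
    _ = dpq p q + (γ.summand x + 1 + ∑ y ∈ γ.pairs.erase x, γ.summand y) := by
        rw [← Finset.add_sum_erase _ _ hx, hmoved, Finset.sum_congr rfl hfixed]
    _ = γ.D + 1 := by
        rw [D, ← Finset.add_sum_erase _ _ hx]
        ring

end Swap

end Clan

/-- Interchanging the entry of a pair `(i, j)` in position `j` with a sign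
in position `j + 1` (moving the number farther from its mate) increases `D` by exactly
`1`, and symmetrically for interchanging position `i` with a sign in position `i − 1`. -/
theorem dim_move_number_across_sign {n p q : ℕ} :
    (∀ (γ γ' : Clan n p q) (i j j₁ : Fin n), γ.IsPair i j → (j₁ : ℕ) = (j : ℕ) + 1 →
      (γ.c j₁).isSign = true → γ'.c j = γ.c j₁ → γ'.c j₁ = γ.c j →
      (∀ k, k ≠ j → k ≠ j₁ → γ'.c k = γ.c k) → γ'.D = γ.D + 1) ∧
    (∀ (γ γ' : Clan n p q) (i j i₀ : Fin n), γ.IsPair i j → (i₀ : ℕ) + 1 = (i : ℕ) →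
      (γ.c i₀).isSign = true → γ'.c i₀ = γ.c i → γ'.c i = γ.c i₀ →
      (∀ k, k ≠ i₀ → k ≠ i → γ'.c k = γ.c k) → γ'.D = γ.D + 1) := by
  refine ⟨fun γ γ' i j j₁ hij hj₁ hsign h₁ h₂ h₃ => ?_,
    fun γ γ' i j i₀ hij hi₀ hsign h₁ h₂ h₃ => ?_⟩
  · have hcov : j ⋖ j₁ := by simp [Fin.covBy_iff, hj₁]
    have hγ' : γ'.c = γ.c ∘ swap j₁ j := by
      rw [swap_comm]
      exact eq_comp_swap_of_forall_ne h₁ h₂ h₃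
    refine Clan.D_eq_add_one_of_swap (Or.inr hcov) hsign hγ' (x := (i, j))
      (Clan.mem_pairs.mpr hij) (Or.inr rfl) ?_
    have hi : i ≠ j₁ := (hij.1.trans hcov.lt).ne
    have hlt : (i : ℕ) < j := hij.1
    dsimp only
    rw [swap_apply_right, swap_apply_of_ne_of_ne hi hij.1.ne]
    omega
  · have hcov : i₀ ⋖ i := by simp [Fin.covBy_iff, ← hi₀]
    refine Clan.D_eq_add_one_of_swap (Or.inl hcov) hsign (eq_comp_swap_of_forall_ne h₁ h₂ h₃)
      (x := (i, j)) (Clan.mem_pairs.mpr hij) (Or.inl rfl) ?_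
    have hj : j ≠ i₀ := (hcov.lt.trans hij.1).ne'
    have hlt : (i : ℕ) < j := hij.1
    dsimp only
    rw [swap_apply_right, swap_apply_of_ne_of_ne hj hij.1.ne']
    omega
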